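/- Let X be path-connected, b ∈ X, Y ⊆ X a discrete subset containing b, and for each y ∈ Y fix a path s_y from b to y with s_b constant. For a cocycle z ∈ Z¹(X,b;G) let ε_s(z) ∈ C⁰(Y,b;G) be the 0-cochain y ↦ z(s_y). Then the map f_s : H¹(X,Y;G) → H¹(X,b;G) × C⁰(Y,b;G), combining the quotient map with evaluation along the paths s_y, is a bijection, with inverse (α,c) ↦ c⁻¹ • η_s(α) where η_s(α) is the class of ε_s(z)•z for a representative z of α. -/
import Mathlib



/-- A `G`-valued 1-cocycle of the pair `(A, Y)`: a function on paths of `X` lying in `A`,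
trivial on paths lying in `Y`, invariant under homotopies (rel endpoints) lying in `A`,
and multiplicative under concatenation of paths. -/
structure NCocycle {X : Type} [TopologicalSpace X] (A Y : Set X) (G : Type) [Group G] where
  toFun : ∀ {x y : X} (p : Path x y), Set.range p ⊆ A → G
  triv : ∀ {x y : X} (p : Path x y) (hp : Set.range p ⊆ A),
    Set.range p ⊆ Y → toFun p hp = 1
  homotopy_inv : ∀ {x y : X} (p q : Path x y) (F : p.Homotopy q),
    Set.range F ⊆ A → ∀ (hp : Set.range p ⊆ A) (hq : Set.range q ⊆ A),
      toFun p hp = toFun q hq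
  mul : ∀ {x y z : X} (p : Path x y) (q : Path y z)
    (hpq : Set.range (p.trans q) ⊆ A) (hp : Set.range p ⊆ A) (hq : Set.range q ⊆ A),
      toFun (p.trans q) hpq = toFun p hp * toFun q hq

namespace NCocycle

variable {X : Type} [TopologicalSpace X] {G : Type} [Group G]

/-- Two cocycles of `(A, Y)` are cohomologous if they differ by the action
`(c • u)(p) = c(p 0) * u(p) * c(p 1)⁻¹` of a 0-cochain `c` trivial on `Y`. -/
def Cohom {A Y : Set X} (u v : NCocycle A Y G) : Prop :=
  ∃ c : X → G, (∀ y ∈ Y, c y = 1) ∧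
    ∀ {x y : X} (p : Path x y) (hp : Set.range p ⊆ A),
      v.toFun p hp = c x * u.toFun p hp * (c y)⁻¹

/-- The non-abelian cohomology set `H¹(A, Y; G)`. -/
def H1 {X : Type} [TopologicalSpace X] (A Y : Set X) (G : Type) [Group G] :=
  Quot (Cohom (A := A) (Y := Y) (G := G))

/-- Restriction of cocycles to a smaller pair. -/
def res {A A' Y Y' : Set X} (hA : A' ⊆ A) (hY : Y' ⊆ Y) (u : NCocycle A Y G) :
    NCocycle A' Y' G where
  toFun p hp := u.toFun p (hp.trans hA)
  triv p hp h := u.triv p (hp.trans hA) (h.trans hY)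
  homotopy_inv p q F hF hp hq := u.homotopy_inv p q F (hF.trans hA) _ _
  mul p q hpq hp hq := u.mul p q _ _ _

/-- Restriction map on cohomology sets. -/
def H1res {A A' Y Y' : Set X} (hA : A' ⊆ A) (hY : Y' ⊆ Y) :
    H1 A Y G → H1 A' Y' G :=
  Quot.lift (fun u => Quot.mk _ (res hA hY u))
    (fun u v ⟨c, hc, hcv⟩ => Quot.sound
      ⟨c, fun y hy => hc y (hY hy), fun p hp => hcv p (hp.trans hA)⟩)

/-- Any cocycle on the pair `(univ, Y)` takes the value 1 on constant paths. -/
lemma refl_one {Y : Set X} (z : NCocycle (Set.univ : Set X) Y G) (x : X)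
    (h : Set.range (Path.refl x) ⊆ Set.univ) : z.toFun (Path.refl x) h = 1 := by
  have hm := z.mul (Path.refl x) (Path.refl x) (Set.subset_univ _) h h
  have hh := z.homotopy_inv _ _ (Path.Homotopy.reflTrans (Path.refl x))
      (Set.subset_univ _) (Set.subset_univ _) h
  rw [hh] at hm
  exact (left_eq_mul.mp hm)

/-- `Cohom` is an equivalence relation. -/
lemma cohom_equiv {A Y : Set X} : Equivalence (Cohom (A := A) (Y := Y) (G := G)) := by
  constructor
  · intro u
    exact ⟨fun _ => 1, fun _ _ => rfl, fun p hp => by simp⟩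
  · rintro u v ⟨c, hc, hcv⟩
    refine ⟨fun x => (c x)⁻¹, fun y hy => by simp [hc y hy], fun p hp => ?_⟩
    show u.toFun p hp = _
    rw [hcv p hp]; group
  · rintro u v w ⟨c, hc, hcv⟩ ⟨c', hc', hcw⟩
    refine ⟨fun x => c' x * c x, fun y hy => by simp [hc y hy, hc' y hy],
      fun p hp => ?_⟩
    show w.toFun p hp = _
    rw [hcw p hp, hcv p hp]; group

/-- Twisting a cocycle by an arbitrary 0-cochain `d` gives a cocycle of `(univ, Y)`
when `Y` is discrete. -/
def twist {Y₀ Y : Set X}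
    (hdisc : ∀ (x y : X) (q : Path x y), Set.range q ⊆ Y → Set.range q ⊆ {x})
    (z : NCocycle (Set.univ : Set X) Y₀ G) (d : X → G) :
    NCocycle (Set.univ : Set X) Y G where
  toFun {x y} p hp := d x * z.toFun p hp * (d y)⁻¹
  triv {x y} p hp hY := by
    have hx : y = x := by
      have h1 : p 1 ∈ ({x} : Set X) := hdisc x y p hY ⟨1, rfl⟩
      simpa using h1
    subst hx
    have hpr : p = Path.refl y := by
      ext t
      have : p t ∈ ({y} : Set X) := hdisc y y p hY ⟨t, rfl⟩
      simpa using this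
    subst hpr
    show d y * z.toFun (Path.refl y) hp * (d y)⁻¹ = 1
    rw [refl_one z y hp]; group
  homotopy_inv {x y} p q F hF hp hq := by
    show d x * z.toFun p hp * (d y)⁻¹ = d x * z.toFun q hq * (d y)⁻¹
    rw [z.homotopy_inv p q F hF hp hq]
  mul {x y w} p q hpq hp hq := by
    show d x * z.toFun (p.trans q) hpq * (d w)⁻¹
      = (d x * z.toFun p hp * (d y)⁻¹) * (d y * z.toFun q hq * (d w)⁻¹)
    rw [z.mul p q hpq hp hq]; group

end NCocycle

open NCocycle in
/-- Let X be path-connected, Y ⊆ X a discrete subset containing b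
(every path in Y is constant), and s a choice of paths from b to the points of Y with
s b constant.  The map f_s : H¹(X,Y;G) → H¹(X,b;G) × C⁰(Y,b;G), combining the quotient
map with evaluation of cocycles along the chosen paths, is a bijection, with inverse
(α, c) ↦ c⁻¹ • η_s(α). -/
theorem statement17 (X : Type) [TopologicalSpace X] [PathConnectedSpace X]
    (b : X) (G : Type) [Group G]
    (Y : Set X) (hbY : b ∈ Y)
    (hdisc : ∀ (x y : X) (q : Path x y), Set.range q ⊆ Y → Set.range q ⊆ {x})
    (s : ∀ y : X, y ∈ Y → Path b y)
    (hsb : s b hbY = Path.refl b) :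
    ∃ e : H1 (Set.univ : Set X) Y G → {c : ↥Y → G // c ⟨b, hbY⟩ = 1},
      (∀ (w : NCocycle (Set.univ : Set X) Y G) (y : ↥Y),
        (e (Quot.mk _ w)).1 y = w.toFun (s y.1 y.2) (Set.subset_univ _)) ∧
      Function.Bijective
        (fun h : H1 (Set.univ : Set X) Y G =>
          (H1res subset_rfl (Set.singleton_subset_iff.mpr hbY) h, e h)) := by
  -- the evaluation map e
  have ebw : ∀ w : NCocycle (Set.univ : Set X) Y G,
      w.toFun (s b hbY) (Set.subset_univ _) = 1 := by
    intro w
    rw [show w.toFun (s b hbY) (Set.subset_univ _)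
        = w.toFun (Path.refl b) (Set.subset_univ _) by rw [hsb]]
    exact refl_one w b _
  refine ⟨Quot.lift
      (fun w => (⟨fun y => w.toFun (s y.1 y.2) (Set.subset_univ _), ebw w⟩ :
        {c : ↥Y → G // c ⟨b, hbY⟩ = 1}))
      ?_, fun w y => rfl, ?_, ?_⟩
  · rintro u v ⟨c, hc, hcv⟩
    refine Subtype.ext (funext fun y => ?_)
    show u.toFun (s y.1 y.2) (Set.subset_univ _) = v.toFun (s y.1 y.2) (Set.subset_univ _)
    rw [hcv (s y.1 y.2) (Set.subset_univ _), hc b hbY, hc y.1 y.2]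
    group
  · -- injectivity
    intro h1 h2
    induction h1 using Quot.ind with | _ u =>
    induction h2 using Quot.ind with | _ v =>
    intro hpair
    have h1 : Quot.mk _ (res subset_rfl (Set.singleton_subset_iff.mpr hbY) u)
        = Quot.mk _ (res subset_rfl (Set.singleton_subset_iff.mpr hbY) v) :=
      congrArg Prod.fst hpair
    have h2 : ∀ y : ↥Y, u.toFun (s y.1 y.2) (Set.subset_univ _)
        = v.toFun (s y.1 y.2) (Set.subset_univ _) := fun y =>
      congrFun (congrArg Subtype.val (congrArg Prod.snd hpair)) y
    obtain ⟨c, hc, hcv⟩ := cohom_equiv.eqvGen_iff.mp (Quot.eqvGen_exact h1)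
    have hcb : c b = 1 := hc b rfl
    have hcY : ∀ y ∈ Y, c y = 1 := by
      intro y hy
      have := hcv (s y hy) (Set.subset_univ _)
      simp only [res] at this
      rw [← h2 ⟨y, hy⟩, hcb, one_mul] at this
      have h3 : (c y)⁻¹ = 1 := by
        exact mul_left_cancel (a := u.toFun (s y hy) (Set.subset_univ _))
          (by rw [← this, mul_one])
      simpa using congrArg (·⁻¹) h3
    exact Quot.sound ⟨c, hcY, fun p hp => hcv p hp⟩
  · -- surjectivity
    rintro ⟨α, c⟩
    induction α using Quot.ind with | _ z =>
    classical
    set d : X → G := fun x =>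
      if h : x ∈ Y then (c.1 ⟨x, h⟩)⁻¹ * z.toFun (s x h) (Set.subset_univ _) else 1
      with hd
    have hdb : d b = 1 := by
      rw [hd]
      simp only [dif_pos hbY, c.2]
      rw [show z.toFun (s b hbY) (Set.subset_univ _)
          = z.toFun (Path.refl b) (Set.subset_univ _) by rw [hsb], refl_one z b _]
      simp
    refine ⟨Quot.mk _ (twist hdisc z d), ?_⟩
    refine Prod.ext ?_ ?_
    · show Quot.mk _ (res subset_rfl (Set.singleton_subset_iff.mpr hbY) (twist hdisc z d))
        = Quot.mk _ z
      refine Quot.sound ⟨fun x => (d x)⁻¹, fun y hy => ?_, fun {x y} p hp => ?_⟩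
      · rcases hy with rfl; simp [hdb]
      · show z.toFun p hp = (d x)⁻¹ * (d x * z.toFun p hp * (d y)⁻¹) * ((d y)⁻¹)⁻¹
        group
    · refine Subtype.ext (funext fun y => ?_)
      show d b * z.toFun (s y.1 y.2) (Set.subset_univ _) * (d y.1)⁻¹ = c.1 y
      rw [hdb, one_mul, hd]
      simp only [dif_pos y.2, mul_inv_rev, inv_inv, mul_inv_cancel_left]
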